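/- For every n ≥ 2 and 1 ≤ a ≤ n−1, define ι' : V_a^n → V_1^n ⊗ V_{a−1}^n by ι'(v) = (pairing_{V_{n−a}^n} ⊗ Id_{V_1^n} ⊗ Id_{V_{a−1}^n})(d_{a,n}(v) ⊗ v_out^n_{n−a,1,a−1}) and π' : V_1^n ⊗ V_{a−1}^n → V_a^n by π' = (v_in^n_{1,a−1,n−a} ⊗ d_{a,n}^{-1}) ∘ (Id_{V_1^n} ⊗ Id_{V_{a−1}^n} ⊗ copairing_{V_{n−a}^n}). Then the composite π' ∘ ι' is a nonzero 𝔸-scalar multiple of the identity of V_a^n. -/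

import Mathlib

noncomputable section

open scoped TensorProduct

set_option maxHeartbeats 1000000
set_option synthInstance.maxHeartbeats 400000

/-- The ground field `𝔸 = ℚ(q)`. -/
abbrev A : Type := RatFunc ℚ

/-- The element `q ∈ 𝔸`. -/
def qq : A := RatFunc.X

/-- The set of `a`-element subsets of `{0, 1, …, n-1}` (a model for the
`a`-element subsets of `{1, …, n}`), the basis of `V_a^n`. -/
abbrev BS (n a : ℕ) : Type := {s : Finset ℕ // s ⊆ Finset.range n ∧ s.card = a}

instance BS.fintype (n a : ℕ) : Fintype (BS n a) :=
  Fintype.subtype ((Finset.range n).powerset.filter fun s => s.card = a) (by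
    intro s
    simp [Finset.mem_powerset, Finset.mem_filter])

/-- The fundamental representation `V_a^n`, as the `𝔸`-vector space with basis the
`a`-element subsets of an `n`-element set. -/
abbrev V (n a : ℕ) : Type := BS n a → A

/-- `i₋₁ : V_{a-1}^{n-1} → V_a^n` (here with indices shifted:
`iminus n a : V_a^n → V_{a+1}^{n+1}`), the inclusion of the summand of subsets containing
the new top element `n`. -/
def iminus (n a : ℕ) : V n a →ₗ[A] V (n+1) (a+1) where
  toFun f s := if h : n ∈ s.1 then
      f ⟨s.1.erase n, by
        constructor
        · intro x hx
          have hx' := Finset.mem_erase.mp hx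
          have hx2 := s.2.1 hx'.2
          simp only [Finset.mem_range] at hx2 ⊢
          omega
        · rw [Finset.card_erase_of_mem h, s.2.2]; omega⟩
    else 0
  map_add' f g := by
    funext s
    simp only [Pi.add_apply]
    by_cases h : n ∈ s.1 <;> simp [h]
  map_smul' c f := by
    funext s
    simp only [Pi.smul_apply, smul_eq_mul, RingHom.id_apply]
    by_cases h : n ∈ s.1 <;> simp [h]

/-- `i₀ : V_a^{n-1} → V_a^n` (as `izero n a : V_a^n → V_a^{n+1}`), the inclusion of the
summand of subsets not containing the new top element. -/
def izero (n a : ℕ) : V n a →ₗ[A] V (n+1) a where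
  toFun f s := if h : n ∈ s.1 then 0 else
      f ⟨s.1, by
        refine ⟨fun x hx => ?_, s.2.2⟩
        have hx2 := s.2.1 hx
        simp only [Finset.mem_range] at hx2 ⊢
        rcases Nat.lt_succ_iff_lt_or_eq.mp hx2 with h' | h'
        · exact h'
        · exact absurd (h' ▸ hx) h⟩
  map_add' f g := by
    funext s
    simp only [Pi.add_apply]
    by_cases h : n ∈ s.1 <;> simp [h]
  map_smul' c f := by
    funext s
    simp only [Pi.smul_apply, smul_eq_mul, RingHom.id_apply]
    by_cases h : n ∈ s.1 <;> simp [h]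

/-- `p₋₁ : V_a^n → V_{a-1}^{n-1}` (as `pminus n a : V_{a+1}^{n+1} → V_a^n`), the projection
onto the summand of subsets containing the top element. -/
def pminus (n a : ℕ) : V (n+1) (a+1) →ₗ[A] V n a where
  toFun f t := f ⟨insert n t.1, by
    have hn : n ∉ t.1 := fun h => by
      have := t.2.1 h; simp [Finset.mem_range] at this
    constructor
    · intro x hx
      rcases Finset.mem_insert.mp hx with rfl | hx
      · simp
      · have := t.2.1 hx; simp only [Finset.mem_range] at this ⊢; omega
    · rw [Finset.card_insert_of_notMem hn, t.2.2]⟩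
  map_add' f g := rfl
  map_smul' c f := rfl

/-- `p₀ : V_a^n → V_a^{n-1}` (as `pzero n a : V_a^{n+1} → V_a^n`), the projection onto the
summand of subsets not containing the top element. -/
def pzero (n a : ℕ) : V (n+1) a →ₗ[A] V n a where
  toFun f t := f ⟨t.1, by
    refine ⟨fun x hx => ?_, t.2.2⟩
    have := t.2.1 hx; simp only [Finset.mem_range] at this ⊢; omega⟩
  map_add' f g := rfl
  map_smul' c f := rfl

/-- The diagonal operator on `V_a^n` acting by the scalar `x` on basis subsets containing `m`
and by `y` on those not containing `m`; for `m = n-1` this is `x • i₋₁ p₋₁ + y • i₀ p₀`. -/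
def diagOp (n a m : ℕ) (x y : A) : Module.End A (V n a) where
  toFun f s := (if m ∈ s.1 then x else y) * f s
  map_add' f g := by
    funext s
    simp only [Pi.add_apply]
    ring
  map_smul' c f := by
    funext s
    simp only [Pi.smul_apply, smul_eq_mul, RingHom.id_apply]
    ring

/-- The recursively defined action of the generator `X_i^+` on `V_a^n`
(`XpOp n a i`, where `i` is the literal subscript, `1 ≤ i ≤ n-1`). -/
def XpOp : (n a i : ℕ) → Module.End A (V n a)
  | 0, _, _ => 0
  | 1, _, _ => 0
  | _+2, 0, _ => 0
  | n+2, a+1, i =>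
    if a + 1 = n + 2 then 0
    else if i = n + 1 then
      (iminus (n+1) a) ∘ₗ (izero n a) ∘ₗ (pminus n a) ∘ₗ (pzero (n+1) (a+1))
    else
      (iminus (n+1) a) ∘ₗ (XpOp (n+1) a i) ∘ₗ (pminus (n+1) a)
      + (izero (n+1) (a+1)) ∘ₗ (XpOp (n+1) (a+1) i) ∘ₗ (pzero (n+1) (a+1))

/-- The recursively defined action of the generator `X_i^-` on `V_a^n`. -/
def XmOp : (n a i : ℕ) → Module.End A (V n a)
  | 0, _, _ => 0
  | 1, _, _ => 0
  | _+2, 0, _ => 0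
  | n+2, a+1, i =>
    if a + 1 = n + 2 then 0
    else if i = n + 1 then
      (izero (n+1) (a+1)) ∘ₗ (iminus n a) ∘ₗ (pzero n a) ∘ₗ (pminus (n+1) a)
    else
      (iminus (n+1) a) ∘ₗ (XmOp (n+1) a i) ∘ₗ (pminus (n+1) a)
      + (izero (n+1) (a+1)) ∘ₗ (XmOp (n+1) (a+1) i) ∘ₗ (pzero (n+1) (a+1))

/-- The recursively defined action of the generator `K_i` on `V_a^n`.  The middle factors
`diagOp … 1 q` and `diagOp … q⁻¹ 1` are the operators `i₋₁ p₋₁ + q i₀ p₀` and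
`q⁻¹ i₋₁ p₋₁ + i₀ p₀` of the recursion. -/
def KOp : (n a i : ℕ) → Module.End A (V n a)
  | 0, _, _ => 1
  | 1, _, _ => 1
  | _+2, 0, _ => 1
  | n+2, a+1, i =>
    if a + 1 = n + 2 then 1
    else if i = n + 1 then
      (iminus (n+1) a) ∘ₗ (diagOp (n+1) a n 1 qq) ∘ₗ (pminus (n+1) a)
      + (izero (n+1) (a+1)) ∘ₗ (diagOp (n+1) (a+1) n qq⁻¹ 1) ∘ₗ (pzero (n+1) (a+1))
    else
      (iminus (n+1) a) ∘ₗ (KOp (n+1) a i) ∘ₗ (pminus (n+1) a)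
      + (izero (n+1) (a+1)) ∘ₗ (KOp (n+1) (a+1) i) ∘ₗ (pzero (n+1) (a+1))

/-- The recursively defined action of `K_i⁻¹` on `V_a^n` (the inverse of `KOp`),
given by the same recursion with `q` and `q⁻¹` interchanged. -/
def KinvOp : (n a i : ℕ) → Module.End A (V n a)
  | 0, _, _ => 1
  | 1, _, _ => 1
  | _+2, 0, _ => 1
  | n+2, a+1, i =>
    if a + 1 = n + 2 then 1
    else if i = n + 1 then
      (iminus (n+1) a) ∘ₗ (diagOp (n+1) a n 1 qq⁻¹) ∘ₗ (pminus (n+1) a)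
      + (izero (n+1) (a+1)) ∘ₗ (diagOp (n+1) (a+1) n qq 1) ∘ₗ (pzero (n+1) (a+1))
    else
      (iminus (n+1) a) ∘ₗ (KinvOp (n+1) a i) ∘ₗ (pminus (n+1) a)
      + (izero (n+1) (a+1)) ∘ₗ (KinvOp (n+1) (a+1) i) ∘ₗ (pzero (n+1) (a+1))
/-! ### The quantum group `U_q(sl_n)` by generators and relations.

We present the algebra with `m = n - 1` generators of each kind `K i, K i⁻¹, X i⁺, X i⁻`,
indexed by `i : Fin m` (so `i` corresponds to the subscript `i + 1 ∈ {1, …, n-1}`). -/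

/-- Generators of `U_q(sl_n)` (with `m = n-1`). -/
inductive UqGen (m : ℕ) : Type
  | K : Fin m → UqGen m
  | Kinv : Fin m → UqGen m
  | Xp : Fin m → UqGen m
  | Xm : Fin m → UqGen m

/-- The free `𝔸`-algebra on the generators. -/
abbrev FA (m : ℕ) : Type := FreeAlgebra A (UqGen m)

namespace FA
variable {m : ℕ}
def K (i : Fin m) : FA m := FreeAlgebra.ι A (UqGen.K i)
def Kinv (i : Fin m) : FA m := FreeAlgebra.ι A (UqGen.Kinv i)
def Xp (i : Fin m) : FA m := FreeAlgebra.ι A (UqGen.Xp i)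
def Xm (i : Fin m) : FA m := FreeAlgebra.ι A (UqGen.Xm i)
end FA

/-- The Cartan integers `(i,j)` of type `A_m`: `2` if `i = j`, `-1` if `|i-j| = 1`,
`0` if `|i-j| ≥ 2`. -/
def cart {m : ℕ} (i j : Fin m) : ℤ :=
  if i = j then 2 else if (i : ℕ) + 1 = j ∨ (j : ℕ) + 1 = i then -1 else 0

/-- The defining relations of `U_q(sl_n)`. -/
inductive uqRel (m : ℕ) : FA m → FA m → Prop
  | KKinv (i : Fin m) : uqRel m (FA.K i * FA.Kinv i) 1
  | KinvK (i : Fin m) : uqRel m (FA.Kinv i * FA.K i) 1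
  | KK (i j : Fin m) : uqRel m (FA.K i * FA.K j) (FA.K j * FA.K i)
  | KXp (i j : Fin m) : uqRel m (FA.K i * FA.Xp j) (qq ^ (cart i j) • (FA.Xp j * FA.K i))
  | KXm (i j : Fin m) : uqRel m (FA.K i * FA.Xm j) (qq ^ (-cart i j) • (FA.Xm j * FA.K i))
  | XpXm (i j : Fin m) :
      uqRel m (FA.Xp i * FA.Xm j - FA.Xm j * FA.Xp i)
        (if i = j then (qq - qq⁻¹)⁻¹ • (FA.K i - FA.Kinv i) else 0)
  | XpXp (i j : Fin m) (h : (i : ℕ) + 2 ≤ j ∨ (j : ℕ) + 2 ≤ i) :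
      uqRel m (FA.Xp i * FA.Xp j) (FA.Xp j * FA.Xp i)
  | XmXm (i j : Fin m) (h : (i : ℕ) + 2 ≤ j ∨ (j : ℕ) + 2 ≤ i) :
      uqRel m (FA.Xm i * FA.Xm j) (FA.Xm j * FA.Xm i)
  | serreP (i j : Fin m) (h : (i : ℕ) + 1 = j ∨ (j : ℕ) + 1 = i) :
      uqRel m (FA.Xp i ^ 2 * FA.Xp j - (qq + qq⁻¹) • (FA.Xp i * FA.Xp j * FA.Xp i)
        + FA.Xp j * FA.Xp i ^ 2) 0
  | serreM (i j : Fin m) (h : (i : ℕ) + 1 = j ∨ (j : ℕ) + 1 = i) :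
      uqRel m (FA.Xm i ^ 2 * FA.Xm j - (qq + qq⁻¹) • (FA.Xm i * FA.Xm j * FA.Xm i)
        + FA.Xm j * FA.Xm i ^ 2) 0

/-- The quantum group `U_q(sl_{m+1})`, presented by generators and relations.
For `U_q(sl_n)` take `m = n - 1`. -/
abbrev Uq (m : ℕ) : Type := RingQuot (uqRel m)

namespace Uq
variable {m : ℕ}
/-- The generator `K_{i+1}` of `U_q(sl_n)`. -/
def K (i : Fin m) : Uq m := RingQuot.mkAlgHom A (uqRel m) (FA.K i)
/-- The generator `K_{i+1}⁻¹` of `U_q(sl_n)`. -/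
def Kinv (i : Fin m) : Uq m := RingQuot.mkAlgHom A (uqRel m) (FA.Kinv i)
/-- The generator `X_{i+1}^+` of `U_q(sl_n)`. -/
def Xp (i : Fin m) : Uq m := RingQuot.mkAlgHom A (uqRel m) (FA.Xp i)
/-- The generator `X_{i+1}^-` of `U_q(sl_n)`. -/
def Xm (i : Fin m) : Uq m := RingQuot.mkAlgHom A (uqRel m) (FA.Xm i)
end Uq
/-! ### The duality maps `d_{a,n}`, triple invariants, and the pivotal elements `τ`. -/

/-- The sum-of-coefficients functional on `V_a^n`. -/
def sumF (n a : ℕ) : V n a →ₗ[A] A where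
  toFun f := ∑ s : BS n a, f s
  map_add' f g := by simp [Finset.sum_add_distrib]
  map_smul' c f := by simp [Finset.mul_sum]

/-- The "trivial" map `V_a^n → (V_c^n)^*`; when `V_a^n` and `V_c^n` are one-dimensional
(`a = 0` or `a = n`, and correspondingly for `c`) it sends the basis vector to the dual
basis vector.  Used for the base cases of `d_{a,n}`. -/
def dtriv (n a c : ℕ) : V n a →ₗ[A] Module.Dual A (V n c) :=
  LinearMap.smulRight (sumF n a) (sumF n c)

/-- The map `d_{a,n} : V_a^n → (V_{n-a}^n)^*`, defined recursively by
`d_{a,n} = i₀ ∘ d_{a-1,n-1} ∘ p₋₁ + (-q)^{-a} i₋₁ ∘ d_{a,n-1} ∘ p₀`, with both base cases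
sending the basis vector to the dual basis vector.  Here `dmap n a c` has target
`(V_c^n)^*`, to be used with `c = n - a`. -/
def dmap : (n a c : ℕ) → (V n a →ₗ[A] Module.Dual A (V n c))
  | 0, a, c => dtriv 0 a c
  | n+1, 0, c => dtriv (n+1) 0 c
  | n+1, a+1, c =>
    if a + 1 = n + 1 then dtriv (n+1) (a+1) c
    else
      match c with
      | 0 => 0
      | c+1 =>
        (pzero n (c+1)).dualMap ∘ₗ (dmap n a (c+1)) ∘ₗ (pminus n a)
        + ((-qq) ^ (a+1))⁻¹ •
            ((pminus n c).dualMap ∘ₗ (dmap n (a+1) c) ∘ₗ (pzero n (a+1)))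

section voutvin

open TensorProduct

/-- First term of the recursion for `v_out`: `(-1)^c q^{b+c} (i₋₁ ⊗ i₀ ⊗ i₀)`. -/
def vterm1 (n a b c : ℕ) (v : V n a ⊗[A] (V n b ⊗[A] V n c)) :
    V (n+1) (a+1) ⊗[A] (V (n+1) b ⊗[A] V (n+1) c) :=
  ((-1 : A)^c * qq^(b+c)) •
    (TensorProduct.map (iminus n a) (TensorProduct.map (izero n b) (izero n c)) v)

/-- Second term of the recursion for `v_out`: `(-1)^a q^c (i₀ ⊗ i₋₁ ⊗ i₀)`. -/
def vterm2 (n a b c : ℕ) (v : V n a ⊗[A] (V n b ⊗[A] V n c)) :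
    V (n+1) a ⊗[A] (V (n+1) (b+1) ⊗[A] V (n+1) c) :=
  ((-1 : A)^a * qq^c) •
    (TensorProduct.map (izero n a) (TensorProduct.map (iminus n b) (izero n c)) v)

/-- Third term of the recursion for `v_out`: `(-1)^b (i₀ ⊗ i₀ ⊗ i₋₁)`. -/
def vterm3 (n a b c : ℕ) (v : V n a ⊗[A] (V n b ⊗[A] V n c)) :
    V (n+1) a ⊗[A] (V (n+1) b ⊗[A] V (n+1) (c+1)) :=
  ((-1 : A)^b) •
    (TensorProduct.map (izero n a) (TensorProduct.map (izero n b) (iminus n c)) v)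

/-- The triple invariant `v_out^n_{a,b,c} ∈ V_a^n ⊗ V_b^n ⊗ V_c^n` (intended for
`a + b + c = n`), defined by the recursion of Definition `defn:trivalent-vertices`,
omitting any term with a negative subscript. -/
def voutE : (n a b c : ℕ) → V n a ⊗[A] (V n b ⊗[A] V n c)
  | 0, _, _, _ => (fun _ => (1:A)) ⊗ₜ[A] ((fun _ => (1:A)) ⊗ₜ[A] (fun _ => (1:A)))
  | n+1, 0, 0, 0 => 0
  | n+1, a+1, 0, 0 => vterm1 n a 0 0 (voutE n a 0 0)
  | n+1, 0, b+1, 0 => vterm2 n 0 b 0 (voutE n 0 b 0)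
  | n+1, 0, 0, c+1 => vterm3 n 0 0 c (voutE n 0 0 c)
  | n+1, a+1, b+1, 0 =>
      vterm1 n a (b+1) 0 (voutE n a (b+1) 0) + vterm2 n (a+1) b 0 (voutE n (a+1) b 0)
  | n+1, a+1, 0, c+1 =>
      vterm1 n a 0 (c+1) (voutE n a 0 (c+1)) + vterm3 n (a+1) 0 c (voutE n (a+1) 0 c)
  | n+1, 0, b+1, c+1 =>
      vterm2 n 0 b (c+1) (voutE n 0 b (c+1)) + vterm3 n 0 (b+1) c (voutE n 0 (b+1) c)
  | n+1, a+1, b+1, c+1 =>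
      vterm1 n a (b+1) (c+1) (voutE n a (b+1) (c+1))
      + vterm2 n (a+1) b (c+1) (voutE n (a+1) b (c+1))
      + vterm3 n (a+1) (b+1) c (voutE n (a+1) (b+1) c)

/-- First term of the recursion for `v_in`: `(-1)^c (…) ∘ (p₋₁ ⊗ p₀ ⊗ p₀)`. -/
def wterm1 (n a b c : ℕ) (φ : V n a ⊗[A] (V n b ⊗[A] V n c) →ₗ[A] A) :
    V (n+1) (a+1) ⊗[A] (V (n+1) b ⊗[A] V (n+1) c) →ₗ[A] A :=
  ((-1 : A)^c) •
    (φ ∘ₗ TensorProduct.map (pminus n a) (TensorProduct.map (pzero n b) (pzero n c)))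

/-- Second term of the recursion for `v_in`: `(-1)^a q^{-a} (…) ∘ (p₀ ⊗ p₋₁ ⊗ p₀)`. -/
def wterm2 (n a b c : ℕ) (φ : V n a ⊗[A] (V n b ⊗[A] V n c) →ₗ[A] A) :
    V (n+1) a ⊗[A] (V (n+1) (b+1) ⊗[A] V (n+1) c) →ₗ[A] A :=
  ((-1 : A)^a * (qq^a)⁻¹) •
    (φ ∘ₗ TensorProduct.map (pzero n a) (TensorProduct.map (pminus n b) (pzero n c)))

/-- Third term of the recursion for `v_in`: `(-1)^b q^{-a-b} (…) ∘ (p₀ ⊗ p₀ ⊗ p₋₁)`. -/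
def wterm3 (n a b c : ℕ) (φ : V n a ⊗[A] (V n b ⊗[A] V n c) →ₗ[A] A) :
    V (n+1) a ⊗[A] (V (n+1) b ⊗[A] V (n+1) (c+1)) →ₗ[A] A :=
  ((-1 : A)^b * (qq^(a+b))⁻¹) •
    (φ ∘ₗ TensorProduct.map (pzero n a) (TensorProduct.map (pzero n b) (pminus n c)))

/-- The triple coinvariant `v_in^n_{a,b,c} : V_a^n ⊗ V_b^n ⊗ V_c^n → 𝔸` (intended for
`a + b + c = n`), defined recursively, omitting any term with a negative subscript. -/
def vinE : (n a b c : ℕ) → (V n a ⊗[A] (V n b ⊗[A] V n c) →ₗ[A] A)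
  | 0, a, b, c =>
      (LinearMap.mul' A A) ∘ₗ
        TensorProduct.map (sumF 0 a)
          ((LinearMap.mul' A A) ∘ₗ TensorProduct.map (sumF 0 b) (sumF 0 c))
  | n+1, 0, 0, 0 => 0
  | n+1, a+1, 0, 0 => wterm1 n a 0 0 (vinE n a 0 0)
  | n+1, 0, b+1, 0 => wterm2 n 0 b 0 (vinE n 0 b 0)
  | n+1, 0, 0, c+1 => wterm3 n 0 0 c (vinE n 0 0 c)
  | n+1, a+1, b+1, 0 =>
      wterm1 n a (b+1) 0 (vinE n a (b+1) 0) + wterm2 n (a+1) b 0 (vinE n (a+1) b 0)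
  | n+1, a+1, 0, c+1 =>
      wterm1 n a 0 (c+1) (vinE n a 0 (c+1)) + wterm3 n (a+1) 0 c (vinE n (a+1) 0 c)
  | n+1, 0, b+1, c+1 =>
      wterm2 n 0 b (c+1) (vinE n 0 b (c+1)) + wterm3 n 0 (b+1) c (vinE n 0 (b+1) c)
  | n+1, a+1, b+1, c+1 =>
      wterm1 n a (b+1) (c+1) (vinE n a (b+1) (c+1))
      + wterm2 n (a+1) b (c+1) (vinE n (a+1) b (c+1))
      + wterm3 n (a+1) (b+1) c (vinE n (a+1) (b+1) c)

end voutvin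

/-- The operator `∏_{j=1}^{n-1} K_j^j` on `V_a^n`. -/
def kjOp (n a : ℕ) : Module.End A (V n a) :=
  (List.ofFn fun i : Fin (n-1) => (KOp n a ((i : ℕ)+1)) ^ ((i : ℕ)+1)).prod

/-- The pivotal operator `τ_n = ∏_{j=1}^{n-1} K_j^{j(n-j)}` on `V_a^n`. -/
def tauOp (n a : ℕ) : Module.End A (V n a) :=
  (List.ofFn fun i : Fin (n-1) => (KOp n a ((i : ℕ)+1)) ^ (((i : ℕ)+1) * (n - ((i : ℕ)+1)))).prod

/-- The inverse pivotal operator `τ_n⁻¹ = ∏_{j=1}^{n-1} K_j^{-j(n-j)}` on `V_a^n`. -/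
def tauinvOp (n a : ℕ) : Module.End A (V n a) :=
  (List.ofFn fun i : Fin (n-1) => (KinvOp n a ((i : ℕ)+1)) ^ (((i : ℕ)+1) * (n - ((i : ℕ)+1)))).prod

/-- The element `τ_n = ∏_{j=1}^{n-1} K_j^{j(n-j)} ∈ U_q(sl_n)`. -/
def tauU (n : ℕ) : Uq (n-1) :=
  (List.ofFn fun i : Fin (n-1) => (Uq.K i) ^ (((i : ℕ)+1) * (n - ((i : ℕ)+1)))).prod

/-- The Cartan integers for literal subscripts `i, j ∈ {1, …, n-1}`. -/
def cartN (i j : ℕ) : ℤ :=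
  if i = j then 2 else if i + 1 = j ∨ j + 1 = i then -1 else 0

/-- The map `ι' : V_a^n → V_1^n ⊗ V_{a-1}^n`,
`ι' = (pairing_{V_{n-a}} ⊗ Id ⊗ Id) ∘ (d_{a,n} ⊗ v_out^n_{n-a,1,a-1})`. -/
def iotaP (n a : ℕ) : V n a →ₗ[A] (V n 1 ⊗[A] V n (a-1)) :=
  (TensorProduct.lid A (V n 1 ⊗[A] V n (a-1))).toLinearMap
  ∘ₗ TensorProduct.map (contractLeft A (V n (n-a))) LinearMap.id
  ∘ₗ (TensorProduct.assoc A (Module.Dual A (V n (n-a))) (V n (n-a))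
        (V n 1 ⊗[A] V n (a-1))).symm.toLinearMap
  ∘ₗ (TensorProduct.mk A (Module.Dual A (V n (n-a)))
        (V n (n-a) ⊗[A] (V n 1 ⊗[A] V n (a-1)))).flip (voutE n (n-a) 1 (a-1))
  ∘ₗ dmap n a (n-a)

/-- The map `π' : V_1^n ⊗ V_{a-1}^n → V_a^n`,
`π' = (v_in^n_{1,a-1,n-a} ⊗ d_{a,n}⁻¹) ∘ (Id ⊗ Id ⊗ copairing_{V_{n-a}})`, where `dinv` is
the inverse of `d_{a,n}` and the copairing sends `1` to the canonical element
`∑ e_s ⊗ e_s^*`. -/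
def piP (n a : ℕ) (dinv : Module.Dual A (V n (n-a)) →ₗ[A] V n a) :
    (V n 1 ⊗[A] V n (a-1)) →ₗ[A] V n a :=
  (TensorProduct.lid A (V n a)).toLinearMap
  ∘ₗ TensorProduct.map (vinE n 1 (a-1) (n-a)) dinv
  ∘ₗ TensorProduct.map
      (TensorProduct.assoc A (V n 1) (V n (a-1)) (V n (n-a))).toLinearMap LinearMap.id
  ∘ₗ (TensorProduct.assoc A (V n 1 ⊗[A] V n (a-1)) (V n (n-a))
        (Module.Dual A (V n (n-a)))).symm.toLinearMap
  ∘ₗ (TensorProduct.mk A (V n 1 ⊗[A] V n (a-1))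
        (V n (n-a) ⊗[A] Module.Dual A (V n (n-a)))).flip
      ((coevaluation A (V n (n-a))) 1)

/-! `π' ∘ ι'` factors as `d⁻¹ ∘ Z^* ∘ d`, where `Z : V_{n-a}^n → V_{n-a}^n` is the zigzag
composite `(id ⊗ v_in) ∘ (v_out ⊗ id)` of the two trivalent vertices, and the copairing merely
reassembles a dual vector from its values on a basis. Splitting off the top element with
`i₋₁, i₀, p₋₁, p₀` shows `Z = [a] · id` by induction on `n`: of the nine products of terms of the
two recursions only three survive (`p ∘ i` vanishes on mismatched summands), and their
coefficients add up by `[k+1] = q^k + q^{-1} [k]`. -/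

section Zigzag

open TensorProduct

variable {R M₁ M₂ M₃ M₄ N₁ N₂ N₃ P₂ P₃ P₄ : Type*} [CommSemiring R]
  [AddCommMonoid M₁] [AddCommMonoid M₂] [AddCommMonoid M₃] [AddCommMonoid M₄]
  [AddCommMonoid N₁] [AddCommMonoid N₂] [AddCommMonoid N₃]
  [AddCommMonoid P₂] [AddCommMonoid P₃] [AddCommMonoid P₄]
  [Module R M₁] [Module R M₂] [Module R M₃] [Module R M₄]
  [Module R N₁] [Module R N₂] [Module R N₃]
  [Module R P₂] [Module R P₃] [Module R P₄]

/-- The string-diagram composite `(id ⊗ φ) ∘ (v ⊗ id) : M₄ → M₁`. -/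
def zigzag : (M₂ ⊗[R] (M₃ ⊗[R] M₄) →ₗ[R] R) →ₗ[R] M₁ ⊗[R] (M₂ ⊗[R] M₃) →ₗ[R] M₄ →ₗ[R] M₁ :=
  LinearMap.mk₂ R
    (fun φ v => (TensorProduct.rid R M₁).toLinearMap
      ∘ₗ (φ ∘ₗ (TensorProduct.assoc R M₂ M₃ M₄).toLinearMap).lTensor M₁
      ∘ₗ (TensorProduct.assoc R M₁ (M₂ ⊗[R] M₃) M₄).toLinearMap
      ∘ₗ TensorProduct.mk R _ M₄ v)
    (fun φ ψ v => by ext; simp [LinearMap.add_comp, LinearMap.lTensor_add])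
    (fun c φ v => by ext; simp [LinearMap.smul_comp, LinearMap.lTensor_smul])
    (fun φ v w => by ext; simp)
    (fun c φ v => by ext; simp)

@[simp] lemma zigzag_tmul (φ : M₂ ⊗[R] (M₃ ⊗[R] M₄) →ₗ[R] R)
    (x : M₁) (y : M₂) (z : M₃) (e : M₄) :
    zigzag φ (x ⊗ₜ[R] (y ⊗ₜ[R] z)) e = φ (y ⊗ₜ[R] (z ⊗ₜ[R] e)) • x := by
  simp [zigzag]

lemma zigzag_comp_map_map (φ : P₂ ⊗[R] (P₃ ⊗[R] P₄) →ₗ[R] R)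
    (p₁ : M₂ →ₗ[R] P₂) (p₂ : M₃ →ₗ[R] P₃) (p₃ : M₄ →ₗ[R] P₄)
    (i₁ : N₁ →ₗ[R] M₁) (i₂ : N₂ →ₗ[R] M₂) (i₃ : N₃ →ₗ[R] M₃)
    (v : N₁ ⊗[R] (N₂ ⊗[R] N₃)) :
    zigzag (φ ∘ₗ map p₁ (map p₂ p₃)) (map i₁ (map i₂ i₃) v)
      = i₁ ∘ₗ zigzag (φ ∘ₗ map (p₁ ∘ₗ i₂) (map (p₂ ∘ₗ i₃) LinearMap.id)) v ∘ₗ p₃ := by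
  suffices h : zigzag (φ ∘ₗ map p₁ (map p₂ p₃)) ∘ₗ map i₁ (map i₂ i₃)
      = LinearMap.lcomp R M₁ p₃ ∘ₗ LinearMap.llcomp R _ _ _ i₁
        ∘ₗ zigzag (φ ∘ₗ map (p₁ ∘ₗ i₂) (map (p₂ ∘ₗ i₃) LinearMap.id)) from
    LinearMap.congr_fun h v
  ext x y z e
  simp

end Zigzag

section Contraction

open TensorProduct

lemma curry_comp_contractLeft_eq_dualMap_zigzag {R W X Y : Type*} [CommRing R]
    [AddCommGroup W] [AddCommGroup X] [AddCommGroup Y] [Module R W] [Module R X] [Module R Y]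
    (φ : X ⊗[R] (Y ⊗[R] W) →ₗ[R] R) (T : W ⊗[R] (X ⊗[R] Y)) :
    curry (φ ∘ₗ (TensorProduct.assoc R X Y W).toLinearMap)
      ∘ₗ (TensorProduct.lid R (X ⊗[R] Y)).toLinearMap
      ∘ₗ map (contractLeft R W) LinearMap.id
      ∘ₗ (TensorProduct.assoc R (Module.Dual R W) W (X ⊗[R] Y)).symm.toLinearMap
      ∘ₗ (TensorProduct.mk R (Module.Dual R W) (W ⊗[R] (X ⊗[R] Y))).flip T
      = (zigzag φ T).dualMap := by
  induction T using TensorProduct.induction_on with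
  | zero => ext; simp
  | tmul w t =>
    induction t using TensorProduct.induction_on with
    | zero => ext; simp
    | tmul x y => ext; simp [mul_comm]
    | add t₁ t₂ h₁ h₂ =>
      simp only [tmul_add, map_add, LinearMap.comp_add, h₁, h₂]
      ext; simp
  | add T₁ T₂ h₁ h₂ =>
    simp only [map_add, LinearMap.comp_add, h₁, h₂]
    ext; simp

lemma copairing_contract_eq_comp_curry {K W X Y M : Type*} [Field K]
    [AddCommGroup W] [AddCommGroup X] [AddCommGroup Y] [AddCommGroup M]
    [Module K W] [Module K X] [Module K Y] [Module K M] [FiniteDimensional K W]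
    (φ : X ⊗[K] (Y ⊗[K] W) →ₗ[K] K) (ψ : Module.Dual K W →ₗ[K] M) :
    (TensorProduct.lid K M).toLinearMap
      ∘ₗ map φ ψ
      ∘ₗ map (TensorProduct.assoc K X Y W).toLinearMap LinearMap.id
      ∘ₗ (TensorProduct.assoc K (X ⊗[K] Y) W (Module.Dual K W)).symm.toLinearMap
      ∘ₗ (TensorProduct.mk K (X ⊗[K] Y) (W ⊗[K] Module.Dual K W)).flip (coevaluation K W 1)
      = ψ ∘ₗ curry (φ ∘ₗ (TensorProduct.assoc K X Y W).toLinearMap) := by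
  refine TensorProduct.ext' fun x y => ?_
  conv_rhs => rw [LinearMap.comp_apply,
    ← (Module.Basis.ofVectorSpace K W).sum_dual_apply_smul_coord
      (curry (φ ∘ₗ (TensorProduct.assoc K X Y W).toLinearMap) (x ⊗ₜ y))]
  simp [coevaluation_apply_one]

end Contraction

lemma pminus_comp_iminus (n a : ℕ) : pminus n a ∘ₗ iminus n a = LinearMap.id := by
  ext f t
  have hn : n ∉ t.1 := fun h => by simpa using t.2.1 h
  simp [pminus, iminus, Finset.erase_insert hn]

lemma pzero_comp_izero (n a : ℕ) : pzero n a ∘ₗ izero n a = LinearMap.id := by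
  ext f t
  have hn : n ∉ t.1 := fun h => by simpa using t.2.1 h
  simp [pzero, izero, hn]

lemma pminus_comp_izero (n a : ℕ) : pminus n a ∘ₗ izero n (a+1) = 0 := by
  ext f t
  simp [pminus, izero]

lemma pzero_comp_iminus (n a : ℕ) : pzero n (a+1) ∘ₗ iminus n a = 0 := by
  ext f t
  have hn : n ∉ t.1 := fun h => by simpa using t.2.1 h
  simp [pzero, iminus, hn]

lemma iminus_comp_pminus_add_izero_comp_pzero (n a : ℕ) :
    iminus n a ∘ₗ pminus n a + izero n (a+1) ∘ₗ pzero n (a+1) = LinearMap.id := by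
  ext f s
  by_cases h : n ∈ s.1 <;> simp [pminus, iminus, pzero, izero, h, Finset.insert_erase]

lemma izero_comp_pzero_zero (n : ℕ) : izero n 0 ∘ₗ pzero n 0 = LinearMap.id := by
  ext f s
  have h : n ∉ s.1 := by simp [Finset.card_eq_zero.mp s.2.2]
  simp [pzero, izero, h]

lemma iminus_comp_pminus_self (n : ℕ) : iminus n n ∘ₗ pminus n n = LinearMap.id := by
  ext f ⟨s, hsub, hcard⟩
  obtain rfl : s = Finset.range (n+1) := Finset.eq_of_subset_of_card_le hsub (by simp [hcard])
  simp [pminus, iminus]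

lemma qq_ne_zero : qq ≠ 0 := RatFunc.X_ne_zero

/-- The quantum integer `[k] = q^{k-1} + q^{k-3} + ⋯ + q^{1-k}`. -/
def qint (k : ℕ) : A := (∑ j ∈ Finset.range k, qq ^ (2 * j)) / qq ^ (k - 1)

lemma qint_one : qint 1 = 1 := by
  simp [qint]

lemma qint_succ (k : ℕ) : qint (k + 1) = qq ^ k + qq⁻¹ * qint k := by
  have hq := qq_ne_zero
  cases k with
  | zero => simp [qint]
  | succ k =>
    simp only [qint, Finset.sum_range_succ _ (k + 1), Nat.add_sub_cancel]
    field_simp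
    ring

lemma qint_ne_zero {k : ℕ} (hk : k ≠ 0) : qint k ≠ 0 := by
  have hpoly : ∑ j ∈ Finset.range k, (Polynomial.X : Polynomial ℚ) ^ (2 * j) ≠ 0 := fun h => by
    simpa [Polynomial.eval_finsetSum, hk] using congrArg (Polynomial.eval 1) h
  have hnum : ∑ j ∈ Finset.range k, qq ^ (2 * j)
      = algebraMap (Polynomial ℚ) A (∑ j ∈ Finset.range k, Polynomial.X ^ (2 * j)) := by
    simp [qq]
  rw [qint, hnum]
  exact div_ne_zero (RatFunc.algebraMap_ne_zero hpoly) (pow_ne_zero _ qq_ne_zero)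

section Vertices

open TensorProduct

lemma zigzag_wterm3_vterm1 {n a b c d : ℕ} (φ : V n b ⊗[A] (V n c ⊗[A] V n d) →ₗ[A] A)
    (v : V n a ⊗[A] (V n b ⊗[A] V n c)) :
    zigzag (wterm3 n b c d φ) (vterm1 n a b c v) = iminus n a ∘ₗ zigzag φ v ∘ₗ pminus n d := by
  have hcoef : (-1 : A) ^ c * qq ^ (b + c) * ((-1) ^ c * (qq ^ (b + c))⁻¹) = 1 := by
    rw [mul_mul_mul_comm, pow_mul_pow_eq_one c (by norm_num), one_mul,
      mul_inv_cancel₀ (pow_ne_zero _ qq_ne_zero)]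
  simp only [wterm3, vterm1, map_smul, LinearMap.smul_apply, zigzag_comp_map_map,
    pzero_comp_izero, map_id, LinearMap.comp_id, smul_smul, hcoef, one_smul]

lemma zigzag_wterm1_vterm2 {n a b c : ℕ} (φ : V n b ⊗[A] (V n c ⊗[A] V n a) →ₗ[A] A)
    (v : V n a ⊗[A] (V n b ⊗[A] V n c)) :
    zigzag (wterm1 n b c a φ) (vterm2 n a b c v)
      = qq ^ c • (izero n a ∘ₗ zigzag φ v ∘ₗ pzero n a) := by
  have hcoef : (-1 : A) ^ a * qq ^ c * (-1) ^ a = qq ^ c := by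
    rw [mul_right_comm, pow_mul_pow_eq_one a (by norm_num), one_mul]
  simp only [wterm1, vterm2, map_smul, LinearMap.smul_apply, zigzag_comp_map_map,
    pminus_comp_iminus, pzero_comp_izero, map_id, LinearMap.comp_id, smul_smul, hcoef]

lemma zigzag_wterm2_vterm3 {n a b c d : ℕ} (φ : V n b ⊗[A] (V n c ⊗[A] V n d) →ₗ[A] A)
    (v : V n a ⊗[A] (V n b ⊗[A] V n c)) :
    zigzag (wterm2 n b c d φ) (vterm3 n a b c v)
      = (qq ^ b)⁻¹ • (izero n a ∘ₗ zigzag φ v ∘ₗ pzero n d) := by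
  have hcoef : (-1 : A) ^ b * ((-1) ^ b * (qq ^ b)⁻¹) = (qq ^ b)⁻¹ := by
    rw [← mul_assoc, pow_mul_pow_eq_one b (by norm_num), one_mul]
  simp only [wterm2, vterm3, map_smul, LinearMap.smul_apply, zigzag_comp_map_map,
    pminus_comp_iminus, pzero_comp_izero, map_id, LinearMap.comp_id, smul_smul, hcoef]

lemma zigzag_wterm1_vterm1 {n a b c d : ℕ} (φ : V n b ⊗[A] (V n c ⊗[A] V n d) →ₗ[A] A)
    (v : V n a ⊗[A] (V n (b+1) ⊗[A] V n c)) :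
    zigzag (wterm1 n b c d φ) (vterm1 n a (b+1) c v) = 0 := by
  simp [wterm1, vterm1, zigzag_comp_map_map, pminus_comp_izero]

lemma zigzag_wterm2_vterm1 {n a b c d : ℕ} (φ : V n b ⊗[A] (V n c ⊗[A] V n d) →ₗ[A] A)
    (v : V n a ⊗[A] (V n b ⊗[A] V n (c+1))) :
    zigzag (wterm2 n b c d φ) (vterm1 n a b (c+1) v) = 0 := by
  simp [wterm2, vterm1, zigzag_comp_map_map, pminus_comp_izero]

lemma zigzag_wterm3_vterm2 {n a b c d : ℕ} (φ : V n (b+1) ⊗[A] (V n c ⊗[A] V n d) →ₗ[A] A)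
    (v : V n a ⊗[A] (V n b ⊗[A] V n c)) :
    zigzag (wterm3 n (b+1) c d φ) (vterm2 n a b c v) = 0 := by
  simp [wterm3, vterm2, zigzag_comp_map_map, pzero_comp_iminus]

lemma zigzag_wterm2_vterm2 {n a b c d : ℕ} (φ : V n (b+1) ⊗[A] (V n c ⊗[A] V n d) →ₗ[A] A)
    (v : V n a ⊗[A] (V n b ⊗[A] V n (c+1))) :
    zigzag (wterm2 n (b+1) c d φ) (vterm2 n a b (c+1) v) = 0 := by
  simp [wterm2, vterm2, zigzag_comp_map_map, pzero_comp_iminus]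

lemma zigzag_wterm1_vterm3 {n a b c d : ℕ} (φ : V n b ⊗[A] (V n (c+1) ⊗[A] V n d) →ₗ[A] A)
    (v : V n a ⊗[A] (V n (b+1) ⊗[A] V n c)) :
    zigzag (wterm1 n b (c+1) d φ) (vterm3 n a (b+1) c v) = 0 := by
  simp [wterm1, vterm3, zigzag_comp_map_map, pminus_comp_izero]

lemma zigzag_wterm3_vterm3 {n a b c d : ℕ} (φ : V n b ⊗[A] (V n (c+1) ⊗[A] V n d) →ₗ[A] A)
    (v : V n a ⊗[A] (V n b ⊗[A] V n c)) :
    zigzag (wterm3 n b (c+1) d φ) (vterm3 n a b c v) = 0 := by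
  simp [wterm3, vterm3, zigzag_comp_map_map, pzero_comp_iminus]

end Vertices

instance BS.uniqueZero (n : ℕ) : Unique (BS n 0) where
  default := ⟨∅, by simp⟩
  uniq s := Subtype.ext (Finset.card_eq_zero.mp s.2.2)

lemma zigzag_vinE_voutE_base : zigzag (vinE 0 0 0 0) (voutE 0 0 0 0) = LinearMap.id := by
  ext e s
  simp [vinE, voutE, sumF, Unique.eq_default]

lemma zigzag_vinE_voutE_zero (n a c : ℕ) (h : a + c = n) :
    zigzag (vinE n 0 c a) (voutE n a 0 c) = LinearMap.id := by
  induction n generalizing a c with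
  | zero =>
    obtain ⟨rfl, rfl⟩ : a = 0 ∧ c = 0 := by omega
    exact zigzag_vinE_voutE_base
  | succ n ih =>
    rcases a with _ | a <;> rcases c with _ | c
    · omega
    · rw [voutE, vinE]
      simp only [zigzag_wterm2_vterm3, ih 0 c (by omega), pow_zero, inv_one, one_smul,
        LinearMap.id_comp, izero_comp_pzero_zero]
    · obtain rfl : n = a := by omega
      rw [voutE, vinE]
      simp only [zigzag_wterm3_vterm1, ih n 0 (by omega), LinearMap.id_comp,
        iminus_comp_pminus_self]
    · rw [voutE, vinE]
      simp only [map_add, LinearMap.add_apply, zigzag_wterm3_vterm1, zigzag_wterm2_vterm1,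
        zigzag_wterm2_vterm3, zigzag_wterm3_vterm3, ih a (c+1) (by omega),
        ih (a+1) c (by omega), pow_zero, inv_one, one_smul, LinearMap.id_comp, add_zero,
        zero_add, iminus_comp_pminus_add_izero_comp_pzero]

lemma zigzag_vinE_voutE_one (n a c : ℕ) (h : a + 1 + c = n) :
    zigzag (vinE n 1 c a) (voutE n a 1 c) = qint (c + 1) • LinearMap.id := by
  induction n generalizing a c with
  | zero => omega
  | succ n ih =>
    rcases a with _ | a <;> rcases c with _ | c
    · obtain rfl : n = 0 := by omega
      rw [voutE, vinE]
      simp only [zigzag_wterm1_vterm2, zigzag_vinE_voutE_base, pow_zero, one_smul,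
        LinearMap.id_comp, izero_comp_pzero_zero, zero_add, qint_one]
    · rw [voutE, vinE]
      simp only [map_add, LinearMap.add_apply, zigzag_wterm1_vterm2, zigzag_wterm2_vterm3,
        zigzag_wterm2_vterm2, zigzag_wterm1_vterm3, zigzag_vinE_voutE_zero n 0 (c+1) (by omega),
        ih 0 c (by omega), LinearMap.comp_smul, LinearMap.smul_comp, LinearMap.id_comp,
        izero_comp_pzero_zero, add_zero, zero_add, pow_one]
      rw [smul_smul, ← add_smul, ← qint_succ]
    · rw [voutE, vinE]
      simp only [map_add, LinearMap.add_apply, zigzag_wterm3_vterm1, zigzag_wterm1_vterm2,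
        zigzag_wterm1_vterm1, zigzag_wterm3_vterm2, zigzag_vinE_voutE_zero n (a+1) 0 (by omega),
        ih a 0 (by omega), LinearMap.id_comp, add_zero, zero_add, qint_one, pow_zero, one_smul]
      exact iminus_comp_pminus_add_izero_comp_pzero n a
    · rw [voutE, vinE]
      simp only [map_add, LinearMap.add_apply, zigzag_wterm3_vterm1, zigzag_wterm1_vterm2,
        zigzag_wterm2_vterm3, zigzag_wterm1_vterm1, zigzag_wterm2_vterm1, zigzag_wterm3_vterm2,
        zigzag_wterm2_vterm2, zigzag_wterm1_vterm3, zigzag_wterm3_vterm3,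
        zigzag_vinE_voutE_zero n (a+1) (c+1) (by omega), ih a (c+1) (by omega),
        ih (a+1) c (by omega), LinearMap.comp_smul, LinearMap.smul_comp, LinearMap.id_comp,
        add_zero, zero_add, pow_one]
      rw [← iminus_comp_pminus_add_izero_comp_pzero, smul_add, add_assoc, smul_smul, ← add_smul,
        ← qint_succ]

theorem statement17_general (n a : ℕ) (ha1 : 1 ≤ a) (ha2 : a ≤ n - 1)
    (dinv : Module.Dual A (V n (n-a)) →ₗ[A] V n a)
    (hd1 : dinv ∘ₗ dmap n a (n-a) = LinearMap.id) :
    ∃ c : A, c ≠ 0 ∧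
      piP n a dinv ∘ₗ iotaP n a = c • (LinearMap.id : V n a →ₗ[A] V n a) := by
  refine ⟨qint a, qint_ne_zero (by omega), ?_⟩
  have hZ : zigzag (vinE n 1 (a-1) (n-a)) (voutE n (n-a) 1 (a-1)) = qint a • LinearMap.id := by
    rw [zigzag_vinE_voutE_one n (n-a) (a-1) (by omega), Nat.sub_add_cancel ha1]
  calc piP n a dinv ∘ₗ iotaP n a
      = dinv ∘ₗ (zigzag (vinE n 1 (a-1) (n-a)) (voutE n (n-a) 1 (a-1))).dualMap
          ∘ₗ dmap n a (n-a) := by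
        rw [piP, copairing_contract_eq_comp_curry, ← curry_comp_contractLeft_eq_dualMap_zigzag]
        rfl
    _ = qint a • (dinv ∘ₗ dmap n a (n-a)) := by
        have hdual : (qint a • LinearMap.id : V n (n-a) →ₗ[A] V n (n-a)).dualMap
            = qint a • LinearMap.id := by
          ext
          simp
        rw [hZ, hdual, LinearMap.smul_comp, LinearMap.id_comp, LinearMap.comp_smul]
    _ = qint a • LinearMap.id := by rw [hd1]

/-- for every `n ≥ 2` and `1 ≤ a ≤ n-1`, the composite `π' ∘ ι'` is a
nonzero `𝔸`-scalar multiple of the identity of `V_a^n`. -/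
theorem statement17 (n a : ℕ) (hn : 2 ≤ n) (ha1 : 1 ≤ a) (ha2 : a ≤ n - 1)
    (dinv : Module.Dual A (V n (n-a)) →ₗ[A] V n a)
    (hd1 : dinv ∘ₗ dmap n a (n-a) = LinearMap.id)
    (hd2 : dmap n a (n-a) ∘ₗ dinv = LinearMap.id) :
    ∃ c : A, c ≠ 0 ∧
      piP n a dinv ∘ₗ iotaP n a = c • (LinearMap.id : V n a →ₗ[A] V n a) :=
  statement17_general n a ha1 ha2 dinv hd1

end
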